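/- For every n ≥ 1 and ϑ ∈ (0,1), the induced 1-norm of R_{n+1} is attained on its first column and equals ‖R_{n+1}‖₁ = Σ_{r=1}^{n+1} |(R_{n+1})_{r,1}| = (h³(1−ϑ) − h² + h + 1) / (2h(h(ϑ−1)+1)). -/

import Mathlib

open Matrix Real Filter

/-- tridiagonal Toeplitz matrix with diagonal `d` and off-diagonal `o` -/
def trid (N : ℕ) (d o : ℝ) : Matrix (Fin N) (Fin N) ℝ :=
  Matrix.of fun r c => if r = c then d else if r.1 + 1 = c.1 ∨ c.1 + 1 = r.1 then o else 0

/-- the matrix `T_{n+1}`: the Toeplitz matrix generated by `2 - 2cos θ`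
(diagonal entries 2, off-diagonal entries -1) -/
def T (N : ℕ) : Matrix (Fin N) (Fin N) ℝ := trid N 2 (-1)

/-- the grid spacing `h = 1/(n+1)` -/
noncomputable def h (n : ℕ) : ℝ := 1 / (n + 1)

/-- `S_{n+1} = h⁻² T_{n+1}` -/
noncomputable def S (n : ℕ) : Matrix (Fin (n+1)) (Fin (n+1)) ℝ := ((h n)^2)⁻¹ • T (n+1)

/-- the vector `v_h` with first component `ϑh²-2`, second `(1-ϑ)h²+1`, the rest `0` -/
noncomputable def vh (n : ℕ) (ϑ : ℝ) : Fin (n+1) → ℝ :=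
  fun i => if i.1 = 0 then ϑ * (h n)^2 - 2 else if i.1 = 1 then (1-ϑ) * (h n)^2 + 1 else 0

/-- the first standard basis vector `e₁` -/
def e1 (n : ℕ) : Fin (n+1) → ℝ := fun i => if i.1 = 0 then 1 else 0

/-- the Coco–Russo matrix `A_h = S_{n+1} + h⁻² e₁ v_hᵀ` -/
noncomputable def A (n : ℕ) (ϑ : ℝ) : Matrix (Fin (n+1)) (Fin (n+1)) ℝ :=
  S n + ((h n)^2)⁻¹ • Matrix.vecMulVec (e1 n) (vh n ϑ)

/-- `R_{n+1} = (h⁻² S⁻¹ e₁ v_hᵀ S⁻¹) / (1 + h⁻² v_hᵀ S⁻¹ e₁)` -/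
noncomputable def R (n : ℕ) (ϑ : ℝ) : Matrix (Fin (n+1)) (Fin (n+1)) ℝ :=
  (1 + ((h n)^2)⁻¹ * (vh n ϑ ⬝ᵥ ((S n)⁻¹ *ᵥ e1 n)))⁻¹ •
    (((h n)^2)⁻¹ • Matrix.vecMulVec ((S n)⁻¹ *ᵥ e1 n) (vh n ϑ ᵥ* (S n)⁻¹))

/-- matrix norm induced by the vector ∞-norm: maximum absolute row sum -/
noncomputable def normInf {N : ℕ} (M : Matrix (Fin (N+1)) (Fin (N+1)) ℝ) : ℝ :=
  Finset.univ.sup' Finset.univ_nonempty (fun r => ∑ c, |M r c|)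

/-- matrix norm induced by the vector 1-norm: maximum absolute column sum -/
noncomputable def norm1 {N : ℕ} (M : Matrix (Fin (N+1)) (Fin (N+1)) ℝ) : ℝ :=
  Finset.univ.sup' Finset.univ_nonempty (fun c => ∑ r, |M r c|)

noncomputable def Tinv (N : ℕ) : Matrix (Fin N) (Fin N) ℝ :=
  Matrix.of fun i j => (((min i.1 j.1 : ℕ) : ℝ) + 1) * ((N : ℝ) - ((max i.1 j.1 : ℕ) : ℝ)) / ((N : ℝ) + 1)

lemma key (N a b : ℕ) (ha : a < N) (hb : b < N) :
    2 * (((min a b : ℕ) + 1 : ℝ) * ((N:ℝ) - ((max a b : ℕ):ℝ)) / ((N:ℝ)+1))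
    - (if _ : a + 1 < N then ((min (a+1) b : ℕ) + 1 : ℝ) * ((N:ℝ) - ((max (a+1) b : ℕ):ℝ)) / ((N:ℝ)+1) else 0)
    - (if _ : 0 < a then ((min (a-1) b : ℕ) + 1 : ℝ) * ((N:ℝ) - ((max (a-1) b : ℕ):ℝ)) / ((N:ℝ)+1) else 0)
    = if a = b then 1 else 0 := by
  have hN : ((N:ℝ) + 1) ≠ 0 := by positivity
  rcases Nat.lt_trichotomy a b with hab | hab | hab
  · rw [if_neg (by omega)]
    rw [show min a b = a from by omega, show max a b = b from by omega,
      dif_pos (by omega), show min (a+1) b = a + 1 from by omega,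
      show max (a+1) b = b from by omega]
    by_cases h0 : 0 < a
    · rw [dif_pos h0, show min (a-1) b = a - 1 from by omega,
        show max (a-1) b = b from by omega]
      have h1 : 1 ≤ a := h0
      push_cast [Nat.cast_sub h1]
      field_simp
      ring
    · rw [dif_neg h0]
      have : a = 0 := by omega
      subst this
      push_cast
      field_simp
      ring
  · subst hab
    rw [if_pos rfl, show min a a = a from by omega, show max a a = a from by omega]
    by_cases hlt : a + 1 < N
    · rw [dif_pos hlt, show min (a+1) a = a from by omega,
        show max (a+1) a = a + 1 from by omega]
      by_cases h0 : 0 < a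
      · rw [dif_pos h0, show min (a-1) a = a - 1 from by omega,
          show max (a-1) a = a from by omega]
        have h1 : 1 ≤ a := h0
        push_cast [Nat.cast_sub h1]
        field_simp
        ring
      · rw [dif_neg h0]
        have : a = 0 := by omega
        subst this
        push_cast
        field_simp
        ring
    · rw [dif_neg hlt]
      have hA : a + 1 = N := by omega
      by_cases h0 : 0 < a
      · rw [dif_pos h0, show min (a-1) a = a - 1 from by omega,
          show max (a-1) a = a from by omega]
        have h1 : 1 ≤ a := h0
        have hAr : (N:ℝ) = (a:ℝ) + 1 := by push_cast [← hA]; ring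
        push_cast [Nat.cast_sub h1]
        rw [hAr]
        field_simp
        ring
      · rw [dif_neg h0]
        have : a = 0 := by omega
        subst this
        have hAr : (N:ℝ) = 1 := by push_cast [← hA]; ring
        rw [hAr]
        norm_num
  · rw [if_neg (by omega)]
    rw [show min a b = b from by omega, show max a b = a from by omega]
    have h0 : 0 < a := by omega
    rw [dif_pos h0, show min (a-1) b = b from by omega,
      show max (a-1) b = a - 1 from by omega]
    have h1 : 1 ≤ a := h0
    by_cases hlt : a + 1 < N
    · rw [dif_pos hlt, show min (a+1) b = b from by omega,
        show max (a+1) b = a + 1 from by omega]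
      push_cast [Nat.cast_sub h1]
      field_simp
      ring
    · rw [dif_neg hlt]
      have hA : a + 1 = N := by omega
      have hAr : (N:ℝ) = (a:ℝ) + 1 := by push_cast [← hA]; ring
      push_cast [Nat.cast_sub h1]
      rw [hAr]
      field_simp
      ring

theorem T_mul_Tinv (N : ℕ) : T N * Tinv N = 1 := by
  ext i j
  rw [Matrix.mul_apply]
  have hsum : ∀ k : Fin N, T N i k * Tinv N k j =
      2 * (if k = i then Tinv N k j else 0)
      - (if k.1 = i.1 + 1 then Tinv N k j else 0)
      - (if k.1 + 1 = i.1 then Tinv N k j else 0) := by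
    intro k
    simp only [T, trid, Matrix.of_apply]
    split_ifs <;> simp only [Fin.ext_iff] at * <;> first | ring1 | (exfalso; omega)
  rw [Finset.sum_congr rfl (fun k _ => hsum k), Finset.sum_sub_distrib,
    Finset.sum_sub_distrib, ← Finset.mul_sum]
  rw [Finset.sum_ite_eq' Finset.univ i (fun k => Tinv N k j)]
  rw [if_pos (Finset.mem_univ i)]
  have hup : (∑ k : Fin N, if k.1 = i.1 + 1 then Tinv N k j else 0)
      = if hlt : i.1 + 1 < N then Tinv N ⟨i.1+1, hlt⟩ j else 0 := by
    split_ifs with hlt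
    · rw [Finset.sum_eq_single (⟨i.1+1, hlt⟩ : Fin N)]
      · rw [if_pos rfl]
      · intro b _ hb
        rw [if_neg (by simpa [Fin.ext_iff] using hb)]
      · intro hnot; exact absurd (Finset.mem_univ _) hnot
    · apply Finset.sum_eq_zero
      intro k _
      rw [if_neg (by omega)]
  have hdn : (∑ k : Fin N, if k.1 + 1 = i.1 then Tinv N k j else 0)
      = if hlt : 0 < i.1 then Tinv N ⟨i.1-1, by omega⟩ j else 0 := by
    split_ifs with hlt
    · rw [Finset.sum_eq_single (⟨i.1-1, by omega⟩ : Fin N)]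
      · rw [if_pos (by simp; omega)]
      · intro b _ hb
        rw [if_neg (by simp [Fin.ext_iff] at hb ⊢; omega)]
      · intro hnot; exact absurd (Finset.mem_univ _) hnot
    · apply Finset.sum_eq_zero
      intro k _
      rw [if_neg (by omega)]
  rw [hup, hdn, Matrix.one_apply]
  have := key N i.1 j.1 i.2 j.2
  simp only [Tinv, Matrix.of_apply, Fin.ext_iff] at *
  convert this using 2 <;> push_cast <;> ring

lemma h_pos (n : ℕ) : 0 < h n := by
  unfold h; positivity

lemma h_ne (n : ℕ) : h n ≠ 0 := (h_pos n).ne'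

lemma S_inv_eq (n : ℕ) : (S n)⁻¹ = (h n)^2 • Tinv (n+1) := by
  apply Matrix.inv_eq_right_inv
  rw [S, Matrix.smul_mul, Matrix.mul_smul, smul_smul,
    inv_mul_cancel₀ (pow_ne_zero 2 (h_ne n)), one_smul, T_mul_Tinv]

lemma u_apply (n : ℕ) (i : Fin (n+1)) :
    ((S n)⁻¹ *ᵥ e1 n) i = (h n)^2 * (((n:ℝ)+1) - i.1) / ((n:ℝ)+2) := by
  rw [S_inv_eq]
  simp only [Matrix.mulVec, dotProduct, Matrix.smul_apply, e1, smul_eq_mul]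
  rw [Finset.sum_eq_single (0 : Fin (n+1))]
  · simp [Tinv]
    push_cast
    ring
  · intro b _ hb
    rw [if_neg (by intro h0; exact hb (Fin.ext (by simpa using h0))), mul_zero]
  · intro hnot; exact absurd (Finset.mem_univ _) hnot

lemma vecmul_split (n : ℕ) (hn : 1 ≤ n) (ϑ : ℝ) (f : Fin (n+1) → ℝ) :
    (∑ i, vh n ϑ i * f i)
      = (ϑ * (h n)^2 - 2) * f ⟨0, by omega⟩ + ((1-ϑ) * (h n)^2 + 1) * f ⟨1, by omega⟩ := by
  rw [← Finset.sum_subset (Finset.subset_univ ({⟨0, by omega⟩, ⟨1, by omega⟩} :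
      Finset (Fin (n+1))))]
  · rw [Finset.sum_pair (by simp [Fin.ext_iff])]
    simp [vh]
  · intro x _ hx
    simp only [Finset.mem_insert, Finset.mem_singleton, Fin.ext_iff] at hx
    push_neg at hx
    simp only [vh, Fin.val_mk] at *
    rw [if_neg hx.1, if_neg hx.2, zero_mul]

lemma w_apply (n : ℕ) (hn : 1 ≤ n) (ϑ : ℝ) (j : Fin (n+1)) :
    (vh n ϑ ᵥ* (S n)⁻¹) j =
      if j.1 = 0 then (h n)^2 * ((h n)^2*((n:ℝ)+ϑ) - ((n:ℝ)+2)) / ((n:ℝ)+2)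
      else (h n)^4 * (((n:ℝ)+1) - j.1) * (2-ϑ) / ((n:ℝ)+2) := by
  rw [S_inv_eq]
  simp only [Matrix.vecMul, dotProduct, Matrix.smul_apply, smul_eq_mul]
  rw [vecmul_split n hn ϑ]
  simp only [Tinv, Matrix.of_apply, Fin.val_mk]
  split_ifs with hj
  · rw [show min 0 j.1 = 0 from by omega, show max 0 j.1 = j.1 from by omega,
      show min 1 j.1 = 0 from by omega, show max 1 j.1 = 1 from by omega, hj]
    push_cast
    field_simp
    ring
  · rw [show min 0 j.1 = 0 from by omega, show max 0 j.1 = j.1 from by omega,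
      show min 1 j.1 = 1 from by omega, show max 1 j.1 = j.1 from by omega]
    push_cast
    field_simp
    ring

lemma dot_eq (n : ℕ) (hn : 1 ≤ n) (ϑ : ℝ) :
    vh n ϑ ⬝ᵥ ((S n)⁻¹ *ᵥ e1 n) = (h n)^2 * ((h n)^2*((n:ℝ)+ϑ) - ((n:ℝ)+2)) / ((n:ℝ)+2) := by
  simp only [dotProduct]
  rw [vecmul_split n hn ϑ, u_apply, u_apply]
  simp only [Fin.val_mk]
  push_cast
  field_simp
  ring

set_option maxHeartbeats 1000000 in
/-- `‖R_{n+1}‖₁` is attained on the first column and equals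
`(h³(1−ϑ) − h² + h + 1)/(2h(h(ϑ−1)+1))`. -/
theorem stmt_8 (n : ℕ) (hn : 1 ≤ n) (ϑ : ℝ) (hϑ : ϑ ∈ Set.Ioo (0:ℝ) 1) :
    norm1 (R n ϑ) = ∑ r : Fin (n+1), |R n ϑ r 0| ∧
    norm1 (R n ϑ) = ((h n)^3 * (1 - ϑ) - (h n)^2 + h n + 1)
                      / (2 * h n * (h n * (ϑ - 1) + 1)) := by
  obtain ⟨hϑ0, hϑ1⟩ := hϑ
  have hh := h_pos n
  have hn1 : (1:ℝ) ≤ (n:ℝ) := by exact_mod_cast hn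
  have hn2 : (0:ℝ) < (n:ℝ) + 2 := by positivity
  have hnϑ : (0:ℝ) < (n:ℝ) + ϑ := by linarith
  have hdef : h n = 1/((n:ℝ)+1) := rfl
  have hh2 : (h n)^2 ≤ 1/4 := by
    rw [hdef]
    rw [div_pow, one_pow]
    rw [div_le_div_iff₀ (by positivity) (by norm_num)]
    nlinarith
  have hD : (1 + ((h n)^2)⁻¹ * (vh n ϑ ⬝ᵥ ((S n)⁻¹ *ᵥ e1 n)))
      = (h n)^2*((n:ℝ)+ϑ)/((n:ℝ)+2) := by
    rw [dot_eq n hn]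
    field_simp
    try ring
  have hDpos : (0:ℝ) < (h n)^2*((n:ℝ)+ϑ)/((n:ℝ)+2) :=
    div_pos (mul_pos (pow_pos hh 2) hnϑ) hn2
  have hR : ∀ i j, R n ϑ i j = ((h n)^2*((n:ℝ)+ϑ)/((n:ℝ)+2))⁻¹ *
      (((h n)^2)⁻¹ * (((S n)⁻¹ *ᵥ e1 n) i * (vh n ϑ ᵥ* (S n)⁻¹) j)) := by
    intro i j
    simp only [R, Matrix.smul_apply, Matrix.vecMulVec_apply, smul_eq_mul, hD]
  have hu_nonneg : ∀ r : Fin (n+1), 0 ≤ ((S n)⁻¹ *ᵥ e1 n) r := by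
    intro r
    rw [u_apply]
    have hr : (r.1:ℝ) ≤ (n:ℝ) := by exact_mod_cast Nat.lt_succ_iff.mp r.2
    apply div_nonneg _ (le_of_lt hn2)
    nlinarith
  have sum_u : ∑ r : Fin (n+1), ((S n)⁻¹ *ᵥ e1 n) r = (h n)^2 * ((n:ℝ)+1)/2 := by
    simp_rw [u_apply]
    rw [← Finset.sum_div, ← Finset.mul_sum]
    have gauss : ∑ i : Fin (n+1), ((i:ℕ):ℝ) = (n:ℝ)*((n:ℝ)+1)/2 := by
      rw [Fin.sum_univ_eq_sum_range (fun i => ((i:ℕ):ℝ))]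
      have := Finset.sum_range_id_mul_two (n+1)
      have hc : ((∑ i ∈ Finset.range (n+1), i : ℕ) : ℝ) * 2 = ((n+1) * n : ℕ) := by
        exact_mod_cast congrArg (Nat.cast : ℕ → ℝ) this
      push_cast at hc ⊢
      linarith
    rw [Finset.sum_sub_distrib, gauss]
    simp only [Finset.sum_const, Finset.card_univ, Fintype.card_fin, nsmul_eq_mul]
    push_cast
    field_simp
    ring
  have hcol : ∀ j, (∑ r, |R n ϑ r j|) =
      (((h n)^2*((n:ℝ)+ϑ)/((n:ℝ)+2))⁻¹ * ((h n)^2)⁻¹ * ((h n)^2 * ((n:ℝ)+1)/2)) *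
        |(vh n ϑ ᵥ* (S n)⁻¹) j| := by
    intro j
    have : ∀ r, |R n ϑ r j| = (((h n)^2*((n:ℝ)+ϑ)/((n:ℝ)+2))⁻¹ * ((h n)^2)⁻¹ *
        ((S n)⁻¹ *ᵥ e1 n) r) * |(vh n ϑ ᵥ* (S n)⁻¹) j| := by
      intro r
      rw [hR r j, abs_mul, abs_mul, abs_mul,
        abs_of_pos (inv_pos.mpr hDpos), abs_of_pos (inv_pos.mpr (pow_pos hh 2)),
        abs_of_nonneg (hu_nonneg r)]
      ring
    simp_rw [this]
    rw [← Finset.sum_mul, ← Finset.mul_sum, sum_u]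
  -- the weight vector values
  have hw := w_apply n hn ϑ
  have hw0 : (vh n ϑ ᵥ* (S n)⁻¹) 0
      = (h n)^2 * ((h n)^2*((n:ℝ)+ϑ) - ((n:ℝ)+2)) / ((n:ℝ)+2) := by
    rw [hw 0]
    norm_num
  have habs0 : |(vh n ϑ ᵥ* (S n)⁻¹) 0|
      = (h n)^2 * (((n:ℝ)+2) - (h n)^2*((n:ℝ)+ϑ)) / ((n:ℝ)+2) := by
    rw [hw0, abs_of_nonpos]
    · field_simp
      ring
    · apply div_nonpos_of_nonpos_of_nonneg _ (le_of_lt hn2)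
      apply mul_nonpos_of_nonneg_of_nonpos (by positivity)
      nlinarith
  have hcmp : ∀ j : Fin (n+1), |(vh n ϑ ᵥ* (S n)⁻¹) j| ≤ |(vh n ϑ ᵥ* (S n)⁻¹) 0| := by
    intro j
    by_cases hj : j.1 = 0
    · have : j = 0 := Fin.ext hj
      rw [this]
    · rw [hw j, if_neg hj, habs0]
      have hj1 : (1:ℝ) ≤ (j.1:ℝ) := by exact_mod_cast Nat.one_le_iff_ne_zero.mpr hj
      have hjn : (j.1:ℝ) ≤ (n:ℝ) := by exact_mod_cast Nat.lt_succ_iff.mp j.2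
      rw [abs_of_nonneg (by
        apply div_nonneg _ (le_of_lt hn2)
        apply mul_nonneg (mul_nonneg (by positivity) (by linarith))
        linarith)]
      rw [div_le_div_iff₀ hn2 hn2]
      have hbr : ((n:ℝ)+ϑ) + ((n:ℝ)+1-(j.1:ℝ))*(2-ϑ) ≤ 4*((n:ℝ)+2) := by nlinarith
      have hbr0 : (0:ℝ) ≤ ((n:ℝ)+ϑ) + ((n:ℝ)+1-(j.1:ℝ))*(2-ϑ) := by nlinarith
      have key2 : (h n)^2 * (((n:ℝ)+ϑ) + ((n:ℝ)+1-(j.1:ℝ))*(2-ϑ)) ≤ (n:ℝ)+2 := by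
        have := mul_le_mul hh2 hbr hbr0 (by norm_num)
        linarith
      have hkey3 : 0 ≤ ((n:ℝ)+2) - (h n)^2*((n:ℝ)+ϑ)
          - (h n)^2*((n:ℝ)+1-(j.1:ℝ))*(2-ϑ) := by nlinarith [key2]
      nlinarith [mul_nonneg (mul_nonneg hn2.le (pow_pos hh 2).le) hkey3]
  have Cnonneg : 0 ≤ ((h n)^2*((n:ℝ)+ϑ)/((n:ℝ)+2))⁻¹ * ((h n)^2)⁻¹ *
      ((h n)^2 * ((n:ℝ)+1)/2) := by positivity
  have hmax : norm1 (R n ϑ) = ∑ r : Fin (n+1), |R n ϑ r 0| := by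
    unfold norm1
    apply le_antisymm
    · apply Finset.sup'_le
      intro j _
      rw [hcol j, hcol 0]
      exact mul_le_mul_of_nonneg_left (hcmp j) Cnonneg
    · exact Finset.le_sup' (fun c => ∑ r : Fin (n+1), |R n ϑ r c|) (Finset.mem_univ (0 : Fin (n+1)))
  refine ⟨hmax, ?_⟩
  rw [hmax, hcol 0, habs0]
  have k1 : ((n:ℝ)+1) ≠ 0 := by positivity
  have k2 : ((n:ℝ)+2) ≠ 0 := by positivity
  have k3 : ((n:ℝ)+ϑ) ≠ 0 := ne_of_gt hnϑ
  have k5 : h n * (ϑ - 1) + 1 = ((n:ℝ)+ϑ)/((n:ℝ)+1) := by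
    rw [hdef]; field_simp; ring
  rw [k5, hdef]
  field_simp
  ring
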